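/- arXiv:1501.03466 — 2 statements merged into one kernel-verified Lean document; each statement's English description precedes it below -/
import Mathlib

section
/- There exists a continuous linear automorphism R : ℓ∞ → ℓ∞ (a bijective bounded linear operator with bounded inverse) such that R f = f for every f ∈ c₀, R is not the identity, and R is not given by a c₀-matrix. In particular, there exist two distinct automorphisms of ℓ∞ preserving c₀ which agree on c₀. -/
/-!
By Hahn–Banach there is a functional `φ` on `ℓ∞` vanishing on `c₀` with `φ 1 ≠ 0`, since `1` is at
distance `1` from `c₀`. As `φ e₀ = 0`, the transvection `f ↦ f + φ f • e₀` is an automorphism of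
`ℓ∞`; it fixes `c₀` pointwise but moves `1`. An operator given by a matrix is determined by its
values on the unit vectors `eₖ ∈ c₀`, so a `c₀`-matrix for it would be the identity matrix,
forcing it to fix `1` as well.
-/

open Filter Topology

noncomputable section

/-- The Banach space `ℓ∞` of bounded real sequences with the sup norm. -/
abbrev ellInfty : Type := BoundedContinuousFunction ℕ ℝ

/-- `c₀`, the subspace of `ℓ∞` of sequences converging to `0`. -/
def czero : Submodule ℝ ellInfty where
  carrier := {f | Tendsto (⇑f) atTop (𝓝 (0 : ℝ))}
  add_mem' := by intro a b ha hb; simpa [Pi.add_def] using ha.add hb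
  zero_mem' := by
    show Tendsto _ _ _
    simp only [BoundedContinuousFunction.coe_zero]
    exact tendsto_const_nhds
  smul_mem' := by intro c f hf; simpa using hf.const_mul c

/-- `R : ℓ∞ → ℓ∞` is given by the `c₀`-matrix `b`: the rows of `b` are absolutely summable
with uniformly bounded `ℓ₁`-norms, the columns of `b` converge to `0`, and `R` acts by
matrix multiplication by `b`. -/
structure IsC0Matrix (R : ellInfty →L[ℝ] ellInfty) (b : ℕ → ℕ → ℝ) : Prop where
  rows_summable : ∀ i, Summable fun j => |b i j|
  rows_bounded : ∃ C : ℝ, ∀ i, (∑' j, |b i j|) ≤ C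
  cols_vanish : ∀ j, Tendsto (fun i => b i j) atTop (𝓝 (0 : ℝ))
  matrix_repr : ∀ f : ellInfty, ∀ i, R f i = ∑' j, b i j * f j

namespace ContinuousLinearEquiv

variable {R E : Type*} [Ring R] [TopologicalSpace R] [TopologicalSpace E] [AddCommGroup E]
  [Module R E] [ContinuousAdd E] [ContinuousSMul R E]

def transvection {f : StrongDual R E} {v : E} (h : f v = 0) : E ≃L[R] E where
  __ := LinearEquiv.transvection (f := (f : E →ₗ[R] R)) h
  continuous_toFun := by
    change Continuous fun x => x + f x • v
    fun_prop
  continuous_invFun := by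
    change Continuous fun x => x + f x • -v
    fun_prop

theorem transvection_apply {f : StrongDual R E} {v : E} (h : f v = 0) (x : E) :
    transvection h x = x + f x • v :=
  rfl

end ContinuousLinearEquiv

theorem Submodule.exists_strongDual_eq_zero_of_notMem {𝕜 E : Type*} [RCLike 𝕜]
    [NormedAddCommGroup E] [NormedSpace 𝕜 E] (p : Submodule 𝕜 E) [IsClosed (p : Set E)]
    {x : E} (hx : x ∉ p) : ∃ φ : StrongDual 𝕜 E, (∀ y ∈ p, φ y = 0) ∧ φ x ≠ 0 := by
  obtain ⟨g, hg⟩ := SeparatingDual.exists_ne_zero (R := 𝕜) (x := p.mkQL x)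
    (by simpa [Submodule.mkQL_apply, Submodule.Quotient.mk_eq_zero] using hx)
  exact ⟨g.comp p.mkQL, fun y hy => by simp [(Submodule.Quotient.mk_eq_zero p).2 hy], hg⟩

def unitVec (k : ℕ) : ellInfty :=
  BoundedContinuousFunction.ofNormedAddCommGroupDiscrete (Pi.single k 1 : ℕ → ℝ) 1
    (fun n => by rcases eq_or_ne n k with rfl | h <;> simp [*])

@[simp]
theorem unitVec_apply (k n : ℕ) : unitVec k n = (Pi.single k 1 : ℕ → ℝ) n :=
  rfl

theorem unitVec_ne_zero (k : ℕ) : unitVec k ≠ 0 :=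
  fun h => by simpa using DFunLike.congr_fun h k

theorem unitVec_mem_czero (k : ℕ) : unitVec k ∈ czero :=
  tendsto_const_nhds.congr' <| (eventually_gt_atTop k).mono fun n hn => by
    simp [hn.ne']

theorem one_le_dist_one_of_mem_czero {f : ellInfty} (hf : f ∈ czero) : 1 ≤ dist 1 f := by
  have hlim : Tendsto (fun n => dist (1 : ℝ) (f n)) atTop (𝓝 1) := by
    simpa using (tendsto_const_nhds (x := (1 : ℝ))).dist hf
  exact le_of_tendsto' hlim fun n => BoundedContinuousFunction.dist_coe_le_dist (f := 1) n

theorem one_notMem_topologicalClosure_czero : (1 : ellInfty) ∉ czero.topologicalClosure := by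
  intro h
  obtain ⟨f, hf, hdist⟩ := Metric.mem_closure_iff.1 h 1 one_pos
  exact (one_le_dist_one_of_mem_czero hf).not_gt hdist

theorem exists_strongDual_czero_eq_zero_one_ne_zero :
    ∃ φ : StrongDual ℝ ellInfty, (∀ f ∈ czero, φ f = 0) ∧ φ 1 ≠ 0 := by
  have : IsClosed (czero.topologicalClosure : Set ellInfty) := czero.isClosed_topologicalClosure
  obtain ⟨φ, hφ, hφ1⟩ :=
    czero.topologicalClosure.exists_strongDual_eq_zero_of_notMem one_notMem_topologicalClosure_czero
  exact ⟨φ, fun f hf => hφ f (czero.le_topologicalClosure hf), hφ1⟩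

theorem IsC0Matrix.eq_id_of_forall_unitVec {R : ellInfty →L[ℝ] ellInfty} {b : ℕ → ℕ → ℝ}
    (hb : IsC0Matrix R b) (hR : ∀ k, R (unitVec k) = unitVec k) : R = .id ℝ ellInfty := by
  have hentry : ∀ i j, b i j = (Pi.single j 1 : ℕ → ℝ) i := fun i j => by
    rw [← unitVec_apply, ← hR, hb.matrix_repr, tsum_eq_single j (fun k hk => by simp [hk])]
    simp
  ext f i
  simp [hb.matrix_repr, hentry, Pi.single_apply]

/-- There is a continuous linear automorphism of `ℓ∞` which is the identity on `c₀` but not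
the identity, and which is not given by a `c₀`-matrix; in particular there are two distinct
automorphisms of `ℓ∞`, both preserving `c₀`, which agree on `c₀`. -/
theorem statement5 :
    (∃ R : ellInfty ≃L[ℝ] ellInfty,
      (∀ f ∈ czero, R f = f) ∧
      (∃ f : ellInfty, R f ≠ f) ∧
      ¬ ∃ b : ℕ → ℕ → ℝ, IsC0Matrix (R : ellInfty →L[ℝ] ellInfty) b) ∧
    (∃ R₁ R₂ : ellInfty ≃L[ℝ] ellInfty, R₁ ≠ R₂ ∧
      (∀ f ∈ czero, R₁ f ∈ czero) ∧ (∀ f ∈ czero, R₂ f ∈ czero) ∧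
      ∀ f ∈ czero, R₁ f = R₂ f) := by
  obtain ⟨φ, hφ, hφ1⟩ := exists_strongDual_czero_eq_zero_one_ne_zero
  set R := ContinuousLinearEquiv.transvection (hφ _ (unitVec_mem_czero 0))
  have hR : ∀ f ∈ czero, R f = f := fun f hf => by
    simp [R, ContinuousLinearEquiv.transvection_apply, hφ f hf]
  have hR1 : R 1 ≠ 1 := by
    simpa [R, ContinuousLinearEquiv.transvection_apply] using ⟨hφ1, unitVec_ne_zero 0⟩
  refine ⟨⟨R, hR, ⟨1, hR1⟩, fun ⟨b, hb⟩ => hR1 ?_⟩,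
    R, .refl ℝ _, fun h => hR1 (by rw [h]; rfl), fun f hf => (hR f hf).symm ▸ hf,
    fun f hf => hf, hR⟩
  have hR_id := hb.eq_id_of_forall_unitVec fun k => hR _ (unitVec_mem_czero k)
  exact DFunLike.congr_fun hR_id 1
end
end

section
/- If R : ℓ∞ → ℓ∞ is a bounded linear operator with R f = 0 for every f ∈ c₀ (an antimatrix operator), then the induced bounded linear operator [R] : ℓ∞/c₀ → ℓ∞/c₀ (determined by [R] ∘ Q = Q ∘ R) factors through ℓ∞ (i.e., [R] = R₂ ∘ R₁ for some bounded linear operators R₁ : ℓ∞/c₀ → ℓ∞ and R₂ : ℓ∞ → ℓ∞/c₀) and is locally null. -/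
open Filter Topology

noncomputable section

/-- The quotient Banach space `ℓ∞/c₀`; `czero.mkQ : ℓ∞ → ℓ∞/c₀` is the quotient map. -/
abbrev ellInftyModCzero : Type := ellInfty ⧸ czero

/-- A bounded operator `T` on `ℓ∞/c₀` is *locally null* if for every infinite `A ⊆ ℕ`
there is an infinite `A₁ ⊆ A` such that `T (Q f) = 0` for every `f ∈ ℓ∞` vanishing
outside of `A₁`. -/
def LocallyNull (T : ellInftyModCzero →L[ℝ] ellInftyModCzero) : Prop :=
  ∀ A : Set ℕ, A.Infinite → ∃ A₁ ⊆ A, A₁.Infinite ∧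
    ∀ f : ellInfty, (∀ n ∉ A₁, f n = 0) → T (czero.mkQ f) = 0

/-! A bounded operator vanishing on `c₀` descends to `ℓ∞/c₀`, which gives the factorisation
`T = Q ∘ [R]`.

For local nullity, split an infinite `A ⊆ ℕ` into uncountably many almost disjoint infinite sets
`B x`, coded by the initial segments of the branches `x` of the binary tree. If for `N` indices `i`
some `fᵢ` supported in `B i` has `‖fᵢ‖ ≤ C` and `(R fᵢ) n₀ = 1`, then `g = ∑ fᵢ` agrees off a
finite set with a sequence of norm at most `C`, so `N = (R g) n₀ ≤ ‖R‖ * C`. Hence only countably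
many `B i` support some `f` with `R f ≠ 0`, and `R` vanishes on everything supported in any
other `B i`. -/

open BoundedContinuousFunction

lemma mem_czero_of_eventually_eq_zero {f : ellInfty} (hf : ∀ᶠ n in cofinite, f n = 0) :
    f ∈ czero := by
  rw [Nat.cofinite_eq_atTop] at hf
  exact tendsto_const_nhds.congr' (hf.mono fun _ hn => hn.symm)

instance : Uncountable (ℕ → Bool) :=
  uncountable_iff_forall_not_surjective.2 fun f hf => by
    obtain ⟨n, hn⟩ := hf fun n => !f n n
    simpa using congrFun hn n

def initialSegments (x : ℕ → Bool) : Set (List Bool) :=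
  Set.range fun n => (List.range n).map x

lemma initialSegments_infinite (x : ℕ → Bool) : (initialSegments x).Infinite :=
  Set.infinite_range_of_injective fun n m h => by simpa using congrArg List.length h

lemma initialSegments_inter_finite {x y : ℕ → Bool} (hxy : x ≠ y) :
    (initialSegments x ∩ initialSegments y).Finite := by
  obtain ⟨k, hk⟩ := Function.ne_iff.1 hxy
  refine ((Set.finite_Iic k).image fun n => (List.range n).map x).subset ?_
  rintro _ ⟨⟨n, rfl⟩, ⟨m, hm⟩⟩
  refine ⟨n, ?_, rfl⟩
  have hmn : m = n := by simpa using congrArg List.length hm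
  subst hmn
  by_contra hkn
  have := congrArg (·[k]?) hm
  simp_all

lemma exists_almostDisjoint_family {A : Set ℕ} (hA : A.Infinite) :
    ∃ B : (ℕ → Bool) → Set ℕ, (∀ x, B x ⊆ A) ∧ (∀ x, (B x).Infinite) ∧
      Pairwise fun x y => (B x ∩ B y).Finite := by
  set emb : ℕ ↪ A := hA.natEmbedding
  set e : List Bool → ℕ := fun l => emb (Encodable.encode l)
  have he : e.Injective := fun l l' h =>
    Encodable.encode_injective (emb.injective (Subtype.ext h))
  refine ⟨fun x => e '' initialSegments x, ?_, fun x => ?_, fun x y hxy => ?_⟩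
  · rintro x _ ⟨l, -, rfl⟩
    exact (emb _).2
  · exact (initialSegments_infinite x).image he.injOn
  · dsimp only
    rw [← Set.image_inter he]
    exact (initialSegments_inter_finite hxy).image e

section Antimatrix

variable {R : ellInfty →L[ℝ] ellInfty}

lemma norm_map_le_of_eventually_abs_le (hR : ∀ f ∈ czero, R f = 0) {f : ellInfty} {C : ℝ}
    (hC : 0 ≤ C) (hf : ∀ᶠ n in cofinite, |f n| ≤ C) : ‖R f‖ ≤ ‖R‖ * C := by
  set S : Set ℕ := {n | |f n| ≤ C}
  have hbound : ∀ n, ‖S.indicator f n‖ ≤ C := fun n => by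
    by_cases hn : n ∈ S
    · simpa [Set.indicator_of_mem hn] using show |f n| ≤ C from hn
    · simpa [Set.indicator_of_notMem hn] using hC
  set g : ellInfty := ofNormedAddCommGroupDiscrete (S.indicator f) C hbound
  have hg : ‖g‖ ≤ C := (norm_le hC).2 hbound
  have hfg : f - g ∈ czero := mem_czero_of_eventually_eq_zero <| hf.mono fun n hn => by
    simp [g, Set.indicator_of_mem (show n ∈ S from hn)]
  calc ‖R f‖ = ‖R g‖ := by rw [← sub_add_cancel f g, map_add, hR _ hfg, zero_add]
    _ ≤ ‖R‖ * ‖g‖ := R.le_opNorm g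
    _ ≤ ‖R‖ * C := by gcongr

lemma eventually_abs_sum_apply_le {ι : Type*} {B : ι → Set ℕ}
    (hB : Pairwise fun i j => (B i ∩ B j).Finite) (t : Finset ι) {f : ι → ellInfty}
    (hf : ∀ i ∈ t, ∀ n ∉ B i, f i n = 0) {C : ℝ} (hC : 0 ≤ C) (hfC : ∀ i ∈ t, ‖f i‖ ≤ C) :
    ∀ᶠ n in cofinite, |(∑ i ∈ t, f i) n| ≤ C := by
  have hdisj : ∀ᶠ n in cofinite, ∀ i ∈ t, ∀ j ∈ t, i ≠ j → n ∉ B i ∩ B j := by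
    refine (eventually_all_finset t).2 fun i _ => (eventually_all_finset t).2 fun j _ => ?_
    rcases eq_or_ne i j with rfl | hij
    · exact Eventually.of_forall fun _ h => (h rfl).elim
    · exact (hB hij).eventually_cofinite_notMem.mono fun _ hn _ => hn
  filter_upwards [hdisj] with n hn
  rw [coe_sum, Finset.sum_apply]
  by_cases hex : ∃ i ∈ t, n ∈ B i
  · obtain ⟨i, hit, hni⟩ := hex
    rw [Finset.sum_eq_single_of_mem i hit fun j hjt hji => hf j hjt n fun hnj => hn i hit j hjt
      (Ne.symm hji) ⟨hni, hnj⟩]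
    exact (Real.norm_eq_abs _ ▸ (f i).norm_coe_le_norm n).trans (hfC i hit)
  · push Not at hex
    rw [Finset.sum_eq_zero fun i hi => hf i hi n (hex i hi), abs_zero]
    exact hC

lemma finite_setOf_exists_supported_map_apply_eq_one (hR : ∀ f ∈ czero, R f = 0) {ι : Type*}
    {B : ι → Set ℕ} (hB : Pairwise fun i j => (B i ∩ B j).Finite) (n₀ : ℕ) {C : ℝ} (hC : 0 ≤ C) :
    {i | ∃ f : ellInfty, (∀ n ∉ B i, f n = 0) ∧ ‖f‖ ≤ C ∧ R f n₀ = 1}.Finite := by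
  set S := {i | ∃ f : ellInfty, (∀ n ∉ B i, f n = 0) ∧ ‖f‖ ≤ C ∧ R f n₀ = 1}
  choose! f hfB hfC hf1 using fun i (hi : i ∈ S) => hi
  have hcard : ∀ t : Finset ι, ↑t ⊆ S → (t.card : ℝ) ≤ ‖R‖ * C := by
    intro t htS
    have hsum : R (∑ i ∈ t, f i) n₀ = t.card := by
      rw [map_sum, coe_sum, Finset.sum_apply, Finset.sum_congr rfl fun i hi => hf1 i (htS hi)]
      simp
    calc (t.card : ℝ) ≤ ‖R (∑ i ∈ t, f i)‖ := by
          rw [← hsum]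
          exact (Real.le_norm_self _).trans (norm_coe_le_norm _ n₀)
      _ ≤ ‖R‖ * C := norm_map_le_of_eventually_abs_le hR hC <|
          eventually_abs_sum_apply_le hB t (fun i hi => hfB i (htS hi)) hC
            fun i hi => hfC i (htS hi)
  by_contra hS
  obtain ⟨t, htS, ht⟩ := Set.Infinite.exists_subset_card_eq hS (⌊‖R‖ * C⌋₊ + 1)
  have := hcard t htS
  rw [ht, Nat.cast_add, Nat.cast_one] at this
  linarith [Nat.lt_floor_add_one (‖R‖ * C)]

lemma exists_forall_supported_map_eq_zero (hR : ∀ f ∈ czero, R f = 0) {ι : Type*}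
    [Uncountable ι] {B : ι → Set ℕ} (hB : Pairwise fun i j => (B i ∩ B j).Finite) :
    ∃ i, ∀ f : ellInfty, (∀ n ∉ B i, f n = 0) → R f = 0 := by
  by_contra! hbad
  refine not_countable (α := ι) (Set.countable_univ_iff.1 ?_)
  have hfin (p : ℕ × ℕ) := finite_setOf_exists_supported_map_apply_eq_one hR hB p.1 p.2.cast_nonneg
  refine (Set.countable_iUnion fun p => (hfin p).countable).mono fun i _ => ?_
  obtain ⟨f, hfB, hRf⟩ := hbad i
  obtain ⟨n₀, hn₀⟩ := DFunLike.ne_iff.1 hRf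
  refine Set.mem_iUnion.2 ⟨(n₀, ⌈‖(R f n₀)⁻¹ • f‖⌉₊), (R f n₀)⁻¹ • f, fun n hn => ?_,
    Nat.le_ceil _, ?_⟩
  · simp [hfB n hn]
  · simpa using inv_mul_cancel₀ hn₀

end Antimatrix

/-- If `R : ℓ∞ → ℓ∞` vanishes on `c₀` (an antimatrix operator), then the induced operator
`T = [R]` on `ℓ∞/c₀` factors through `ℓ∞` and is locally null. -/
theorem statement11 (R : ellInfty →L[ℝ] ellInfty) (hR : ∀ f ∈ czero, R f = 0)
    (T : ellInftyModCzero →L[ℝ] ellInftyModCzero)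
    (hT : ∀ f : ellInfty, T (czero.mkQ f) = czero.mkQ (R f)) :
    (∃ (R₁ : ellInftyModCzero →L[ℝ] ellInfty) (R₂ : ellInfty →L[ℝ] ellInftyModCzero),
      T = R₂.comp R₁) ∧ LocallyNull T := by
  refine ⟨⟨czero.liftQL R hR, czero.mkQL, ?_⟩, fun A hA => ?_⟩
  · ext x
    obtain ⟨f, rfl⟩ := czero.mkQ_surjective x
    exact hT f
  · obtain ⟨B, hBA, hBinf, hB⟩ := exists_almostDisjoint_family hA
    obtain ⟨x, hx⟩ := exists_forall_supported_map_eq_zero hR hB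
    exact ⟨B x, hBA x, hBinf x, fun f hf => by rw [hT, hx f hf, map_zero]⟩
end
end
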